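/- Let X be a uniformly rotund Banach space with modulus δ_X and generalized inverse δ_X^{-1}(t) = sup{ε > 0 : δ_X(ε) ≤ t}. Let U ⊆ X be open, ξ a gauge with ξ(r) ≤ δ_X(1/32), C compact connected and (ξ,r₀) almost minimizing in U, x ∈ C, 0 < r < r₀, B(x,r) ⊆ U. Suppose C ∩ B(x,r) is a Lipschitz curve with endpoints x₀, x₁ and C ∩ ∂B(x,r) = {x₀,x₁}, and let L = span{x₁−x₀}. Then for every z ∈ C ∩ B(x,r), dist(z, x + L) ≤ 16 r · δ_X^{-1}(ξ(r)). -/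

import Mathlib

open MeasureTheory

/-- A gauge: a nondecreasing function on `(0,∞)`, nonnegative, tending to `0` at `0⁺`. -/
def IsGauge (ξ : ℝ → ℝ) : Prop :=
  MonotoneOn ξ (Set.Ioi 0) ∧ (∀ r : ℝ, 0 < r → 0 ≤ ξ r) ∧
    Filter.Tendsto ξ (nhdsWithin 0 (Set.Ioi 0)) (nhds 0)

/-- `C` is a compact connected set of finite length, `(ξ, r₀)` almost minimizing in `U`. -/
def AlmostMinimizing {X : Type*} [NormedAddCommGroup X] [NormedSpace ℝ X]
    [MeasurableSpace X] [BorelSpace X]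
    (ξ : ℝ → ℝ) (r₀ : ℝ) (U : Set X) (C : Set X) : Prop :=
  IsCompact C ∧ IsConnected C ∧ μH[1] C < ⊤ ∧
    ∀ x ∈ C ∩ U, ∀ r : ℝ, 0 < r → r ≤ r₀ → Metric.closedBall x r ⊆ U →
      ∀ C' : Set X, IsCompact C' → IsConnected C' →
        C' \ Metric.closedBall x r = C \ Metric.closedBall x r →
        μH[1] (C ∩ Metric.closedBall x r) ≤
          ENNReal.ofReal (1 + ξ r) * μH[1] (C' ∩ Metric.closedBall x r)

/-!
Replacing the arc `C ∩ B(x,r)` by the chord `[x₀,x₁]` gives an admissible competitor, so the arc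
has length at most `(1 + ξ r) ‖x₁ - x₀‖`. As the arc passes through every one of its points `z`,
`‖z - x₀‖ + ‖x₁ - z‖ ≤ (1 + ξ r) ‖x₁ - x₀‖`. By uniform convexity such near-equality in the
triangle inequality forces `z - x₀` to lie within `2r δ⁻¹(ξ r)` of the line `ℝ (x₁ - x₀)`; for
`z = x` it also puts the midpoint of `x₀ x₁` within `r δ⁻¹(ξ r) / 2` of `x`. This gives the bound
with `5/2` in place of `16`.
-/

open Metric Set

section ModulusOfConvexity

variable {X : Type*} [NormedAddCommGroup X]

variable (X) in
noncomputable def modulusOfConvexity (ε : ℝ) : ℝ :=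
  sInf {d : ℝ | ∃ x y : X, ‖x‖ ≤ 1 ∧ ‖y‖ ≤ 1 ∧ ε ≤ ‖x - y‖ ∧ d = 1 - ‖x + y‖ / 2}

variable (X) in
noncomputable def inverseModulusOfConvexity (t : ℝ) : ℝ :=
  sSup {ε : ℝ | 0 < ε ∧ ε ≤ 2 ∧ modulusOfConvexity X ε ≤ t}

lemma modulusOfConvexity_le {a b : X} (ha : ‖a‖ ≤ 1) (hb : ‖b‖ ≤ 1) :
    modulusOfConvexity X ‖a - b‖ ≤ 1 - ‖a + b‖ / 2 := by
  refine csInf_le ⟨0, ?_⟩ ⟨a, b, ha, hb, le_rfl, rfl⟩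
  rintro _ ⟨p, q, hp, hq, -, rfl⟩
  linarith [norm_add_le p q]

lemma inverseModulusOfConvexity_nonneg (t : ℝ) : 0 ≤ inverseModulusOfConvexity X t :=
  Real.sSup_nonneg fun _ hε => hε.1.le

lemma norm_sub_le_inverseModulusOfConvexity {a b : X} {t : ℝ} (ha : ‖a‖ ≤ 1) (hb : ‖b‖ ≤ 1)
    (h : 1 - ‖a + b‖ / 2 ≤ t) : ‖a - b‖ ≤ inverseModulusOfConvexity X t := by
  rcases (norm_nonneg (a - b)).eq_or_lt with h0 | h0
  · rw [← h0]
    exact inverseModulusOfConvexity_nonneg t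
  refine le_csSup ⟨2, fun _ hε => hε.2.1⟩ ⟨h0, ?_, (modulusOfConvexity_le ha hb).trans h⟩
  linarith [norm_sub_le a b]

end ModulusOfConvexity

lemma IsCompact.continuousOn_image_of_leftInvOn {α β : Type*} [TopologicalSpace α]
    [TopologicalSpace β] [T2Space β] {f : α → β} {s : Set α} (hs : IsCompact s)
    (hf : ContinuousOn f s) {g : β → α} (hg : LeftInvOn g f s) : ContinuousOn g (f '' s) := by
  refine continuousOn_iff_isClosed.2 fun t ht => ⟨f '' (t ∩ s), ?_, ?_⟩
  · exact ((hs.inter_left ht).image_of_continuousOn (hf.mono inter_subset_right)).isClosed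
  · rw [inter_eq_self_of_subset_left (image_mono inter_subset_right), hg.image_inter']

section Length

variable {X : Type*} [MetricSpace X] [MeasurableSpace X] [BorelSpace X]

lemma IsPreconnected.ofReal_dist_le_hausdorffMeasure {S : Set X} (hS : IsPreconnected S)
    {a b : X} (ha : a ∈ S) (hb : b ∈ S) : ENNReal.ofReal (dist a b) ≤ μH[1] S := by
  have hf : LipschitzWith 1 (dist a) := LipschitzWith.dist_right a
  have him : Icc 0 (dist a b) ⊆ dist a '' S :=
    (hS.image _ hf.continuous.continuousOn).Icc_subset ⟨a, ha, dist_self a⟩ ⟨b, hb, rfl⟩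
  calc ENNReal.ofReal (dist a b) = μH[1] (Icc 0 (dist a b)) := by
        rw [hausdorffMeasure_real, Real.volume_Icc, sub_zero]
    _ ≤ μH[1] (dist a '' S) := measure_mono him
    _ ≤ (1 : NNReal) ^ (1 : ℝ) * μH[1] S := hf.hausdorffMeasure_image_le zero_le_one S
    _ = μH[1] S := by simp

lemma ofReal_dist_add_dist_le_hausdorffMeasure_image {γ : ℝ → X} {a b t : ℝ}
    (hγ : ContinuousOn γ (Icc a b)) (hinj : InjOn γ (Icc a b)) (ht : t ∈ Icc a b) :
    ENNReal.ofReal (dist (γ a) (γ t) + dist (γ t) (γ b)) ≤ μH[1] (γ '' Icc a b) := by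
  have hsubA : Icc a t ⊆ Icc a b := Icc_subset_Icc le_rfl ht.2
  have hsubB : Icc t b ⊆ Icc a b := Icc_subset_Icc ht.1 le_rfl
  have hA := isPreconnected_Icc.image _ (hγ.mono hsubA)
  have hB := isPreconnected_Icc.image _ (hγ.mono hsubB)
  have hinter : γ '' Icc a t ∩ γ '' Icc t b = {γ t} := by
    rw [← hinj.image_inter hsubA hsubB, Icc_inter_Icc, max_eq_right ht.1, min_eq_left ht.2,
      Icc_self, image_singleton]
  have hdisj : AEDisjoint μH[1] (γ '' Icc a t) (γ '' Icc t b) := by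
    have := Measure.nullSingletonClass_hausdorff X one_pos
    rw [AEDisjoint, hinter, measure_singleton]
  have hBmeas : MeasurableSet (γ '' Icc t b) :=
    (isCompact_Icc.image_of_continuousOn (hγ.mono hsubB)).isClosed.measurableSet
  calc ENNReal.ofReal (dist (γ a) (γ t) + dist (γ t) (γ b))
      = ENNReal.ofReal (dist (γ a) (γ t)) + ENNReal.ofReal (dist (γ t) (γ b)) :=
        ENNReal.ofReal_add dist_nonneg dist_nonneg
    _ ≤ μH[1] (γ '' Icc a t) + μH[1] (γ '' Icc t b) := by
        gcongr
        · exact hA.ofReal_dist_le_hausdorffMeasure (mem_image_of_mem γ ⟨le_rfl, ht.1⟩)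
            (mem_image_of_mem γ ⟨ht.1, le_rfl⟩)
        · exact hB.ofReal_dist_le_hausdorffMeasure (mem_image_of_mem γ ⟨le_rfl, ht.2⟩)
            (mem_image_of_mem γ ⟨ht.2, le_rfl⟩)
    _ = μH[1] (γ '' Icc a b) := by
        rw [← measure_union₀ hBmeas.nullMeasurableSet hdisj, ← image_union,
          Icc_union_Icc_eq_Icc ht.1 ht.2]

end Length

section NormedSpace

variable {X : Type*} [NormedAddCommGroup X] [NormedSpace ℝ X]

lemma norm_sub_le_mul_inverseModulusOfConvexity {a b : X} {ρ t : ℝ} (ha : ‖a‖ ≤ ρ)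
    (hb : ‖b‖ ≤ ρ) (h : 2 * ρ * (1 - t) ≤ ‖a + b‖) :
    ‖a - b‖ ≤ ρ * inverseModulusOfConvexity X t := by
  rcases ((norm_nonneg a).trans ha).eq_or_lt with rfl | hρ
  · simp [norm_le_zero_iff.1 ha, norm_le_zero_iff.1 hb]
  have hscale : ∀ v : X, ‖ρ⁻¹ • v‖ = ‖v‖ / ρ := fun v => by
    rw [norm_smul, Real.norm_of_nonneg (inv_nonneg.2 hρ.le), inv_mul_eq_div]
  have key := norm_sub_le_inverseModulusOfConvexity (X := X) (a := ρ⁻¹ • a) (b := ρ⁻¹ • b)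
    (t := t) (by rw [hscale, div_le_one hρ]; exact ha) (by rw [hscale, div_le_one hρ]; exact hb)
    (by rw [← smul_add, hscale, sub_le_iff_le_add, div_div, ← sub_le_iff_le_add',
      le_div_iff₀ (by positivity)]; linarith)
  rwa [← smul_sub, hscale, div_le_iff₀ hρ, mul_comm] at key

lemma norm_sub_smul_add_le_of_norm_le {p q : X} {t : ℝ} (ht : 0 ≤ t) (hqp : ‖q‖ ≤ ‖p‖)
    (h : ‖p‖ + ‖q‖ ≤ (1 + t) * ‖p + q‖) :
    ‖p - (‖p‖ / ‖p + q‖) • (p + q)‖ ≤ ‖p‖ * inverseModulusOfConvexity X t := by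
  rcases (norm_nonneg (p + q)).eq_or_lt with hD | hD
  · obtain rfl : p = 0 := norm_le_zero_iff.1 (by rw [← hD] at h; linarith [norm_nonneg q])
    simp
  refine norm_sub_le_mul_inverseModulusOfConvexity le_rfl ?_ ?_
  · rw [norm_smul, Real.norm_of_nonneg (by positivity), div_mul_cancel₀ _ hD.ne']
  · have hlow : ‖p + q‖ + ‖p‖ - ‖q‖ ≤ ‖p + (‖p‖ / ‖p + q‖) • (p + q)‖ := by
      have hw : p + (‖p‖ / ‖p + q‖) • (p + q) = (1 + ‖p‖ / ‖p + q‖) • (p + q) - q := by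
        module
      rw [hw]
      refine le_trans (le_of_eq ?_) (norm_sub_norm_le _ _)
      rw [norm_smul, Real.norm_of_nonneg (by positivity), add_mul, div_mul_cancel₀ _ hD.ne']
      ring
    -- `‖p‖ + ‖q‖ - ‖p + q‖ ≤ t ‖p + q‖ ≤ t (‖p‖ + ‖q‖) ≤ 2 t ‖p‖`
    nlinarith [mul_le_mul_of_nonneg_left (norm_add_le p q) ht,
      mul_le_mul_of_nonneg_left hqp ht]

lemma exists_norm_sub_smul_add_le {t : ℝ} (ht : 0 ≤ t) (p q : X)
    (h : ‖p‖ + ‖q‖ ≤ (1 + t) * ‖p + q‖) :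
    ∃ s : ℝ, ‖p - s • (p + q)‖ ≤ max ‖p‖ ‖q‖ * inverseModulusOfConvexity X t := by
  have hδ := inverseModulusOfConvexity_nonneg (X := X) t
  rcases le_total ‖q‖ ‖p‖ with hqp | hpq
  · exact ⟨_, (norm_sub_smul_add_le_of_norm_le ht hqp h).trans
      (mul_le_mul_of_nonneg_right (le_max_left _ _) hδ)⟩
  · rw [add_comm ‖p‖, add_comm p] at h
    refine ⟨1 - ‖q‖ / ‖q + p‖, ?_⟩
    have hneg : p - (1 - ‖q‖ / ‖q + p‖) • (p + q) = -(q - (‖q‖ / ‖q + p‖) • (q + p)) := by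
      rw [add_comm p q]
      module
    rw [hneg, norm_neg]
    exact (norm_sub_smul_add_le_of_norm_le ht hpq h).trans
      (mul_le_mul_of_nonneg_right (le_max_right _ _) hδ)

lemma infDist_line_le_of_dist_add_dist_le {x x₀ x₁ z : X} {r t : ℝ} (ht : 0 ≤ t)
    (hx₀ : dist x₀ x = r) (hx₁ : dist x₁ x = r) (hz : dist z x ≤ r)
    (hx : dist x₀ x + dist x x₁ ≤ (1 + t) * dist x₀ x₁)
    (hzlen : dist x₀ z + dist z x₁ ≤ (1 + t) * dist x₀ x₁) :
    infDist z (range fun s : ℝ => x + s • (x₁ - x₀)) ≤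
      5 / 2 * r * inverseModulusOfConvexity X t := by
  set δ := inverseModulusOfConvexity X t
  have hmid : ‖(x₀ - x) - (x - x₁)‖ ≤ r * δ := by
    refine norm_sub_le_mul_inverseModulusOfConvexity ?_ ?_ ?_
    · rw [← dist_eq_norm, hx₀]
    · rw [← dist_eq_norm, dist_comm, hx₁]
    · rw [sub_add_sub_cancel, ← dist_eq_norm]
      rw [dist_comm x, hx₁] at hx
      nlinarith [dist_triangle_right x₀ x₁ x]
  have hchord : (z - x₀) + (x₁ - z) = x₁ - x₀ := by abel
  obtain ⟨s, hs⟩ := exists_norm_sub_smul_add_le ht (z - x₀) (x₁ - z) (by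
    rw [hchord, ← dist_eq_norm, ← dist_eq_norm, ← dist_eq_norm, dist_comm z, dist_comm x₁ x₀,
      dist_comm x₁]
    exact hzlen)
  have hmax : max ‖z - x₀‖ ‖x₁ - z‖ ≤ 2 * r := by
    rw [← dist_eq_norm, ← dist_eq_norm]
    refine max_le ?_ ?_
    · linarith [dist_triangle z x x₀, dist_comm x x₀]
    · linarith [dist_triangle x₁ x z, dist_comm x z]
  have hδ : 0 ≤ δ := inverseModulusOfConvexity_nonneg t
  have hdecomp : z - (x + (s - 1 / 2) • (x₁ - x₀)) =
      (z - x₀ - s • ((z - x₀) + (x₁ - z))) + (1 / 2 : ℝ) • ((x₀ - x) - (x - x₁)) := by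
    module
  calc infDist z (range fun s : ℝ => x + s • (x₁ - x₀))
      ≤ ‖z - (x + (s - 1 / 2) • (x₁ - x₀))‖ := by
        rw [← dist_eq_norm]
        exact infDist_le_dist_of_mem (mem_range_self _)
    _ ≤ ‖z - x₀ - s • ((z - x₀) + (x₁ - z))‖ + 1 / 2 * ‖(x₀ - x) - (x - x₁)‖ := by
        rw [hdecomp]
        refine (norm_add_le _ _).trans (le_of_eq ?_)
        rw [norm_smul, Real.norm_of_nonneg (by norm_num)]
    _ ≤ 2 * r * δ + 1 / 2 * (r * δ) := by
        gcongr
        exact hs.trans (mul_le_mul_of_nonneg_right hmax hδ)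
    _ = 5 / 2 * r * δ := by ring

open Classical in
lemma exists_segment_competitor {C B : Set X} (hC : IsCompact C) (hCconn : IsConnected C)
    (hB : IsClosed B) (hBconv : Convex ℝ B) {γ : ℝ → X} (hγ : ContinuousOn γ (Icc 0 1))
    (hinj : InjOn γ (Icc 0 1)) (himg : C ∩ B = γ '' Icc 0 1)
    (hfr : C ∩ frontier B ⊆ {γ 0, γ 1}) :
    ∃ C' : Set X, IsCompact C' ∧ IsConnected C' ∧ C' \ B = C \ B ∧
      C' ∩ B = segment ℝ (γ 0) (γ 1) := by
  set τ := Function.invFunOn γ (Icc 0 1)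
  have hτ : LeftInvOn τ γ (Icc 0 1) := hinj.leftInvOn_invFunOn
  set F := B.piecewise (fun y => γ 0 + τ y • (γ 1 - γ 0)) id
  have hF : ContinuousOn F C := by
    refine ContinuousOn.piecewise ?_ ?_ continuousOn_id
    · rintro a ⟨haC, haB⟩
      rcases hfr ⟨haC, haB⟩ with rfl | rfl
      · simp [hτ (left_mem_Icc.2 zero_le_one)]
      · simp [hτ (right_mem_Icc.2 zero_le_one)]
    · rw [hB.closure_eq, himg]
      exact continuousOn_const.add
        ((isCompact_Icc.continuousOn_image_of_leftInvOn hγ hτ).smul continuousOn_const)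
  have hseg : segment ℝ (γ 0) (γ 1) ⊆ B := hBconv.segment_subset
    (himg.symm.subset (mem_image_of_mem γ (left_mem_Icc.2 zero_le_one))).2
    (himg.symm.subset (mem_image_of_mem γ (right_mem_Icc.2 zero_le_one))).2
  have himF : F '' C = segment ℝ (γ 0) (γ 1) ∪ C \ B := by
    have hin : F '' (C ∩ B) = segment ℝ (γ 0) (γ 1) := by
      rw [((B.piecewise_eqOn _ _).mono inter_subset_right).image_eq, himg, image_image,
        segment_eq_image']
      exact image_congr fun t ht => by rw [hτ ht]
    have hout : F '' (C \ B) = C \ B := by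
      rw [((B.piecewise_eqOn_compl _ _).mono (sdiff_subset_compl C B)).image_eq, image_id]
    rw [← hin, ← hout, ← image_union, inter_union_sdiff]
  refine ⟨F '' C, hC.image_of_continuousOn hF, hCconn.image F hF, ?_, ?_⟩
  · rw [himF, union_sdiff_distrib, sdiff_eq_empty.2 hseg, empty_union, Set.sdiff_sdiff, union_self]
  · rw [himF, union_inter_distrib_right, inter_eq_left.2 hseg, sdiff_inter_self, union_empty]

lemma AlmostMinimizing.hausdorffMeasure_inter_closedBall_le [MeasurableSpace X] [BorelSpace X]
    {ξ : ℝ → ℝ} {r₀ r : ℝ} {U C : Set X} {x : X} (hC : AlmostMinimizing ξ r₀ U C) (hx : x ∈ C) (hr : 0 < r) (hrr₀ : r ≤ r₀)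
    (hB : closedBall x r ⊆ U) {γ : ℝ → X} (hγ : ContinuousOn γ (Icc 0 1))
    (hinj : InjOn γ (Icc 0 1)) (himg : C ∩ closedBall x r = γ '' Icc 0 1)
    (hsph : C ∩ sphere x r ⊆ {γ 0, γ 1}) :
    μH[1] (C ∩ closedBall x r) ≤ ENNReal.ofReal (1 + ξ r) * edist (γ 0) (γ 1) := by
  obtain ⟨C', hC'c, hC'conn, hout, hin⟩ := exists_segment_competitor hC.1 hC.2.1
    isClosed_closedBall (convex_closedBall x r) hγ hinj himg
    (by rwa [frontier_closedBall x hr.ne'])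
  have hmin := hC.2.2.2 x ⟨hx, hB (mem_closedBall_self hr.le)⟩ r hr hrr₀ hB C' hC'c hC'conn hout
  rwa [hin, hausdorffMeasure_segment] at hmin

end NormedSpace

theorem stmt_14_general {X : Type*} [NormedAddCommGroup X] [NormedSpace ℝ X]
    [MeasurableSpace X] [BorelSpace X]
    (δX : ℝ → ℝ)
    (hδX : ∀ ε : ℝ, δX ε =
      sInf {d : ℝ | ∃ x y : X, ‖x‖ ≤ 1 ∧ ‖y‖ ≤ 1 ∧ ε ≤ ‖x - y‖ ∧ d = 1 - ‖x + y‖ / 2})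
    (δXinv : ℝ → ℝ)
    (hδXinv : ∀ t : ℝ, δXinv t = sSup {ε : ℝ | 0 < ε ∧ ε ≤ 2 ∧ δX ε ≤ t})
    (U : Set X) (ξ : ℝ → ℝ) (hξ : IsGauge ξ)
    (r₀ : ℝ) (C : Set X) (hC : AlmostMinimizing ξ r₀ U C)
    (x : X) (hx : x ∈ C) (r : ℝ) (hr : 0 < r) (hrr₀ : r < r₀)
    (hB : Metric.closedBall x r ⊆ U)
    (x₀ x₁ : X) (γ : ℝ → X) (K : NNReal)
    (hlip : LipschitzOnWith K γ (Set.Icc 0 1)) (hinj : Set.InjOn γ (Set.Icc 0 1))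
    (hγ0 : γ 0 = x₀) (hγ1 : γ 1 = x₁)
    (himg : C ∩ Metric.closedBall x r = γ '' Set.Icc 0 1)
    (hsph : C ∩ Metric.sphere x r = {x₀, x₁}) :
    ∀ z ∈ C ∩ Metric.closedBall x r,
      Metric.infDist z (Set.range fun s : ℝ => x + s • (x₁ - x₀)) ≤
        16 * r * δXinv (ξ r) := by
  obtain rfl : δX = modulusOfConvexity X := funext hδX
  obtain rfl : δXinv = inverseModulusOfConvexity X := funext hδXinv
  subst hγ0 hγ1
  have hξr : 0 ≤ ξ r := hξ.2.1 r hr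
  have hend : ∀ y ∈ ({γ 0, γ 1} : Set X), dist y x = r := fun y hy => (hsph.symm.subset hy).2
  have harc := hC.hausdorffMeasure_inter_closedBall_le hx hr hrr₀.le hB hlip.continuousOn hinj
    himg hsph.subset
  have hlen : ∀ w ∈ C ∩ closedBall x r, dist (γ 0) w + dist w (γ 1) ≤
      (1 + ξ r) * dist (γ 0) (γ 1) := by
    intro w hw
    obtain ⟨t, ht, rfl⟩ := himg ▸ hw
    have h := (ofReal_dist_add_dist_le_hausdorffMeasure_image hlip.continuousOn hinj ht).trans
      (himg ▸ harc)
    rwa [edist_dist, ← ENNReal.ofReal_mul (by linarith),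
      ENNReal.ofReal_le_ofReal_iff (by positivity)] at h
  intro z hz
  calc _ ≤ 5 / 2 * r * inverseModulusOfConvexity X (ξ r) :=
        infDist_line_le_of_dist_add_dist_le hξr (hend _ (mem_insert _ _))
          (hend _ (mem_insert_of_mem _ rfl)) hz.2 (hlen x ⟨hx, mem_closedBall_self hr.le⟩)
          (hlen z hz)
    _ ≤ 16 * r * inverseModulusOfConvexity X (ξ r) := by
        have := inverseModulusOfConvexity_nonneg (X := X) (ξ r)
        gcongr
        norm_num

theorem stmt_14 {X : Type*} [NormedAddCommGroup X] [NormedSpace ℝ X]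
    [MeasurableSpace X] [BorelSpace X]
    (δX : ℝ → ℝ)
    (hδX : ∀ ε : ℝ, δX ε =
      sInf {d : ℝ | ∃ x y : X, ‖x‖ ≤ 1 ∧ ‖y‖ ≤ 1 ∧ ε ≤ ‖x - y‖ ∧ d = 1 - ‖x + y‖ / 2})
    (hUR : ∀ ε : ℝ, 0 < ε → ε ≤ 2 → 0 < δX ε)
    (δXinv : ℝ → ℝ)
    (hδXinv : ∀ t : ℝ, δXinv t = sSup {ε : ℝ | 0 < ε ∧ ε ≤ 2 ∧ δX ε ≤ t})
    (U : Set X) (hU : IsOpen U) (ξ : ℝ → ℝ) (hξ : IsGauge ξ)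
    (r₀ : ℝ) (C : Set X) (hC : AlmostMinimizing ξ r₀ U C)
    (x : X) (hx : x ∈ C) (r : ℝ) (hr : 0 < r) (hrr₀ : r < r₀)
    (hB : Metric.closedBall x r ⊆ U)
    (hξδ : ξ r ≤ δX (1 / 32))
    (x₀ x₁ : X) (γ : ℝ → X) (K : NNReal)
    (hlip : LipschitzOnWith K γ (Set.Icc 0 1)) (hinj : Set.InjOn γ (Set.Icc 0 1))
    (hγ0 : γ 0 = x₀) (hγ1 : γ 1 = x₁)
    (himg : C ∩ Metric.closedBall x r = γ '' Set.Icc 0 1)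
    (hsph : C ∩ Metric.sphere x r = {x₀, x₁}) :
    ∀ z ∈ C ∩ Metric.closedBall x r,
      Metric.infDist z (Set.range fun s : ℝ => x + s • (x₁ - x₀)) ≤
        16 * r * δXinv (ξ r) :=
  stmt_14_general δX hδX δXinv hδXinv U ξ hξ r₀ C hC x hx r hr hrr₀ hB x₀ x₁ γ K hlip hinj hγ0 hγ1
    himg hsph
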